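/- Let V_k be a finite set of n_k examples and S_k ⊆ V_k a subset of size r_k. If f is L-Lipschitz and for each i define a_i = E_{x₁,x₂∈A(x_i)} ‖f(x₁) − f(x₂)‖, then (1/n_k) Σ_{i∈V_k} a_i ≤ (1/n_k) ( Σ_{i∈S_k} a_i + 2L Σ_{i∈V_k∖S_k} min_{j∈S_k} d_{i,j} ), where d_{i,j} = E_{x∈A(x_i), x'∈A(x_j)} ‖x − x'‖ is the expected augmentation distance. -/

import Mathlib

/-!
For any pivot `x'`, the triangle inequality and the Lipschitz bound give
`dist (f x₁) (f x₂) ≤ L (dist x₁ x' + dist x₂ x')`. Averaging over `x₁, x₂ ∈ A i` and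
`x' ∈ A j` bounds the alignment `a i` by `2 L d i j` for every `j`, in particular for the
minimising `j ∈ S_k`; the terms indexed by `S_k` appear unchanged on both sides.
-/

open Finset

section LipschitzAverage

variable {X Y : Type*} [PseudoMetricSpace X] [PseudoMetricSpace Y] {f : X → Y} {L : ℝ}

lemma card_mul_sum_sum_dist_comp_le (hf : ∀ x x', dist (f x) (f x') ≤ L * dist x x')
    (s t : Finset X) :
    (#t : ℝ) * ∑ x₁ ∈ s, ∑ x₂ ∈ s, dist (f x₁) (f x₂) ≤
      2 * L * #s * ∑ x ∈ s, ∑ x' ∈ t, dist x x' := by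
  have hpivot : ∀ x₁ x₂ x', dist (f x₁) (f x₂) ≤ L * dist x₁ x' + L * dist x₂ x' :=
    fun x₁ x₂ x' => (dist_triangle_right _ _ (f x')).trans (add_le_add (hf _ _) (hf _ _))
  calc (#t : ℝ) * ∑ x₁ ∈ s, ∑ x₂ ∈ s, dist (f x₁) (f x₂)
      = ∑ x₁ ∈ s, ∑ x₂ ∈ s, ∑ _x' ∈ t, dist (f x₁) (f x₂) := by
        simp only [sum_const, nsmul_eq_mul, mul_sum]
    _ ≤ ∑ x₁ ∈ s, ∑ x₂ ∈ s, ∑ x' ∈ t, (L * dist x₁ x' + L * dist x₂ x') := by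
        gcongr; apply hpivot
    _ = 2 * L * #s * ∑ x ∈ s, ∑ x' ∈ t, dist x x' := by
        simp only [sum_add_distrib, sum_const, nsmul_eq_mul, ← mul_sum]
        ring

lemma avg_dist_comp_le_two_mul_avg_dist (hf : ∀ x x', dist (f x) (f x') ≤ L * dist x x')
    {s t : Finset X} (hs : s.Nonempty) (ht : t.Nonempty) :
    ((#s : ℝ) * #s)⁻¹ * ∑ x₁ ∈ s, ∑ x₂ ∈ s, dist (f x₁) (f x₂) ≤
      2 * L * (((#s : ℝ) * #t)⁻¹ * ∑ x ∈ s, ∑ x' ∈ t, dist x x') := by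
  have hs_pos : (0 : ℝ) < #s := by exact_mod_cast hs.card_pos
  have ht_pos : (0 : ℝ) < #t := by exact_mod_cast ht.card_pos
  have hrhs : (#s : ℝ) * #s * (2 * L * (((#s : ℝ) * #t)⁻¹ * ∑ x ∈ s, ∑ x' ∈ t, dist x x')) =
      2 * L * #s * (∑ x ∈ s, ∑ x' ∈ t, dist x x') / #t := by
    field_simp
  rw [inv_mul_le_iff₀ (by positivity), hrhs, le_div_iff₀' ht_pos]
  exact card_mul_sum_sum_dist_comp_le hf s t

end LipschitzAverage

theorem avg_alignment_le_subset_alignment_add_min_dist_general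
    {X H ι : Type*} [DecidableEq ι] [NormedAddCommGroup X] [NormedAddCommGroup H]
    (f : X → H) (L : ℝ) (hL : ∀ x x' : X, ‖f x - f x'‖ ≤ L * ‖x - x'‖)
    (A : ι → Finset X) (hA : ∀ i, (A i).Nonempty)
    (Vk Sk : Finset ι) (hSV : Sk ⊆ Vk) (hSk : Sk.Nonempty)
    (a : ι → ℝ)
    (ha : ∀ i, a i = (((A i).card : ℝ) * (A i).card)⁻¹ *
        ∑ x1 ∈ A i, ∑ x2 ∈ A i, ‖f x1 - f x2‖)
    (d : ι → ι → ℝ)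
    (hd : ∀ i j, d i j = (((A i).card : ℝ) * ((A j).card : ℝ))⁻¹ *
        ∑ x ∈ A i, ∑ x' ∈ A j, ‖x - x'‖) :
    (Vk.card : ℝ)⁻¹ * ∑ i ∈ Vk, a i ≤
      (Vk.card : ℝ)⁻¹ *
        (∑ i ∈ Sk, a i +
          2 * L * ∑ i ∈ Vk \ Sk, Sk.inf' hSk (fun j => d i j)) := by
  have hf : ∀ x x', dist (f x) (f x') ≤ L * dist x x' := by simpa only [dist_eq_norm] using hL
  have ha_le : ∀ i j, a i ≤ 2 * L * d i j := fun i j => by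
    simpa only [ha, hd, dist_eq_norm] using avg_dist_comp_le_two_mul_avg_dist hf (hA i) (hA j)
  gcongr ?_ * ?_
  rw [← sum_sdiff hSV, add_comm, mul_sum]
  gcongr with i
  obtain ⟨j, -, hj⟩ := exists_mem_eq_inf' hSk (d i)
  exact hj ▸ ha_le i j

/-- bound on the average alignment in class `V_k` in terms of the
alignment on a subset `S_k` plus `2L` times the minimum expected augmentation
distances to the subset. -/
theorem avg_alignment_le_subset_alignment_add_min_dist
    {X H ι : Type*} [DecidableEq ι] [NormedAddCommGroup X] [NormedAddCommGroup H]
    (f : X → H) (L : ℝ) (hL : ∀ x x' : X, ‖f x - f x'‖ ≤ L * ‖x - x'‖)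
    (xex : ι → X) (A : ι → Finset X) (hA : ∀ i, (A i).Nonempty)
    (Vk Sk : Finset ι) (hSV : Sk ⊆ Vk) (hSk : Sk.Nonempty)
    (a : ι → ℝ)
    (ha : ∀ i, a i = (((A i).card : ℝ) * (A i).card)⁻¹ *
        ∑ x1 ∈ A i, ∑ x2 ∈ A i, ‖f x1 - f x2‖)
    (d : ι → ι → ℝ)
    (hd : ∀ i j, d i j = (((A i).card : ℝ) * ((A j).card : ℝ))⁻¹ *
        ∑ x ∈ A i, ∑ x' ∈ A j, ‖x - x'‖) :
    (Vk.card : ℝ)⁻¹ * ∑ i ∈ Vk, a i ≤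
      (Vk.card : ℝ)⁻¹ *
        (∑ i ∈ Sk, a i +
          2 * L * ∑ i ∈ Vk \ Sk, Sk.inf' hSk (fun j => d i j)) :=
  avg_alignment_le_subset_alignment_add_min_dist_general f L hL A hA Vk Sk hSV hSk a ha d hd
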